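/- Let D be a triangulated category with shift functor Σ, and let (U₁,V₁) and (U₂,V₂) be co-t-structures on D with V₁ ⊆ V₂. Set H := U₁ ∩ V₂. If (X,Y) is a cotorsion pair in D with V₁ ⊆ Y ⊆ V₂, then (X ∩ V₂, U₁ ∩ Y) is a cotorsion pair in H. -/

import Mathlib

open CategoryTheory Limits Pretriangulated

universe v u

variable {C : Type u} [Category.{v} C] [Preadditive C] [HasZeroObject C]
  [HasShift C ℤ] [∀ n : ℤ, (CategoryTheory.shiftFunctor C n).Additive] [Pretriangulated C]

/-- `A` and `B` form a biproduct decomposition of `E`. -/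
def IsBiprodDecomp (A B E : C) : Prop :=
  ∃ (i : A ⟶ E) (j : B ⟶ E) (p : E ⟶ A) (q : E ⟶ B),
    i ≫ p = 𝟙 A ∧ j ≫ q = 𝟙 B ∧ i ≫ q = 0 ∧ j ≫ p = 0 ∧ p ≫ i + q ≫ j = 𝟙 E

/-- `A` is a direct summand of `E`. -/
def IsDirectSummand (A E : C) : Prop := ∃ B, IsBiprodDecomp A B E

/-- A class of objects is closed under direct summands. -/
def SummandClosed (X : Set C) : Prop := ∀ ⦃A E : C⦄, E ∈ X → IsDirectSummand A E → A ∈ X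

/-- The essential image of a class of objects under the shift by `n`. -/
def shiftSet (n : ℤ) (X : Set C) : Set C := {A | ∃ B ∈ X, Nonempty (A ≅ B⟦n⟧)}

/-- The class `X ∗ Y` of objects `E` admitting a distinguished triangle
`A ⟶ E ⟶ B ⟶ ΣA` with `A ∈ X` and `B ∈ Y`. -/
def starSet (X Y : Set C) : Set C :=
  {E | ∃ (A B : C) (_ : A ∈ X) (_ : B ∈ Y) (f : A ⟶ E) (g : E ⟶ B) (h : B ⟶ A⟦(1 : ℤ)⟧),
    Triangle.mk f g h ∈ distTriang C}

/-- A co-t-structure on a triangulated category. -/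
structure IsCoTStructure (U V : Set C) : Prop where
  summand_U : SummandClosed U
  summand_V : SummandClosed V
  hom_zero : ∀ ⦃A B : C⦄, A ∈ U → B ∈ V → ∀ f : A ⟶ B⟦(1 : ℤ)⟧, f = 0
  cover : ∀ E : C, E ∈ starSet (shiftSet (-1) U) V
  shift_le : shiftSet (-1) U ⊆ U

/-- A cotorsion pair in a triangulated category. -/
structure IsCotorsionPair (X Y : Set C) : Prop where
  summand_X : SummandClosed X
  summand_Y : SummandClosed Y
  hom_zero : ∀ ⦃A B : C⦄, A ∈ X → B ∈ Y → ∀ f : A ⟶ B⟦(1 : ℤ)⟧, f = 0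
  cover₁ : ∀ E : C, E ∈ starSet X (shiftSet 1 Y)
  cover₂ : ∀ E : C, E ∈ starSet (shiftSet (-1) X) Y

/-- `A` is a direct summand of `E` inside the full additive subcategory `H`. -/
def IsDirectSummandIn (H : Set C) (A E : C) : Prop :=
  A ∈ H ∧ ∃ B ∈ H, IsBiprodDecomp A B E

/-- A cotorsion pair in an extension-closed subcategory `H` of a triangulated category. -/
structure IsCotorsionPairIn (H A B : Set C) : Prop where
  subset_A : A ⊆ H
  subset_B : B ⊆ H
  summand_A : ∀ ⦃X E : C⦄, E ∈ A → IsDirectSummandIn H X E → X ∈ A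
  summand_B : ∀ ⦃X E : C⦄, E ∈ B → IsDirectSummandIn H X E → X ∈ B
  hom_zero : ∀ ⦃X Y : C⦄, X ∈ A → Y ∈ B → ∀ f : X ⟶ Y⟦(1 : ℤ)⟧, f = 0
  tri₁ : ∀ ⦃M : C⦄, M ∈ H → ∃ (X Y : C) (_ : X ∈ A) (_ : Y ∈ B)
    (f : Y ⟶ X) (g : X ⟶ M) (h : M ⟶ Y⟦(1 : ℤ)⟧), Triangle.mk f g h ∈ distTriang C
  tri₂ : ∀ ⦃M : C⦄, M ∈ H → ∃ (X Y : C) (_ : X ∈ A) (_ : Y ∈ B)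
    (f : M ⟶ Y) (g : Y ⟶ X) (h : X ⟶ M⟦(1 : ℤ)⟧), Triangle.mk f g h ∈ distTriang C

/-- The closure of a class of objects under finite direct sums and direct summands. -/
inductive addClosure (X : Set C) : C → Prop
  | of {A : C} : A ∈ X → addClosure X A
  | sum {A B E : C} : addClosure X A → addClosure X B → IsBiprodDecomp A B E → addClosure X E
  | summand {A E : C} : addClosure X E → IsDirectSummand A E → addClosure X A

/-- `hatN M n` is `M ∗ ΣM ∗ ⋯ ∗ ΣⁿM`. -/
def hatN (M : Set C) : ℕ → Set C
  | 0 => M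
  | n + 1 => starSet (hatN M n) (shiftSet ((n : ℤ) + 1) M)

/-- `M^∧ = ⋃_{n ≥ 0} M ∗ ΣM ∗ ⋯ ∗ ΣⁿM`. -/
def hatSet (M : Set C) : Set C := ⋃ n : ℕ, hatN M n

/-- `veeN M n` is `Σ⁻ⁿM ∗ ⋯ ∗ Σ⁻¹M ∗ M`. -/
def veeN (M : Set C) : ℕ → Set C
  | 0 => M
  | n + 1 => starSet (shiftSet (-((n : ℤ) + 1)) M) (veeN M n)

/-- `M^∨ = ⋃_{n ≥ 0} Σ⁻ⁿM ∗ ⋯ ∗ Σ⁻¹M ∗ M`. -/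
def veeSet (M : Set C) : Set C := ⋃ n : ℕ, veeN M n

/-- `bandN M m n` is `Σ⁻ᵐM ∗ ⋯ ∗ M ∗ ΣM ∗ ⋯ ∗ ΣⁿM`. -/
def bandN (M : Set C) : ℕ → ℕ → Set C
  | 0, n => hatN M n
  | m + 1, n => starSet (shiftSet (-((m : ℤ) + 1)) M) (bandN M m n)

/-- A class of objects is closed under extensions. -/
def ExtClosed (S : Set C) : Prop := ∀ ⦃T : Triangle C⦄, T ∈ (distTriang C) →
  T.obj₁ ∈ S → T.obj₃ ∈ S → T.obj₂ ∈ S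

/-- A class of objects is closed under cones. -/
def ConesClosed (S : Set C) : Prop := ∀ ⦃T : Triangle C⦄, T ∈ (distTriang C) →
  T.obj₁ ∈ S → T.obj₂ ∈ S → T.obj₃ ∈ S

/-- A class of objects is closed under cocones. -/
def CoconesClosed (S : Set C) : Prop := ∀ ⦃T : Triangle C⦄, T ∈ (distTriang C) →
  T.obj₂ ∈ S → T.obj₃ ∈ S → T.obj₁ ∈ S

/-- The thick closure of a class of objects: the smallest class containing it which is
closed under extensions, cones, cocones and direct summands. -/
inductive thickClosure (X : Set C) : C → Prop
  | of {A : C} : A ∈ X → thickClosure X A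
  | ext {T : Triangle C} : T ∈ (distTriang C) → thickClosure X T.obj₁ → thickClosure X T.obj₃ →
      thickClosure X T.obj₂
  | cone {T : Triangle C} : T ∈ (distTriang C) → thickClosure X T.obj₁ → thickClosure X T.obj₂ →
      thickClosure X T.obj₃
  | cocone {T : Triangle C} : T ∈ (distTriang C) → thickClosure X T.obj₂ → thickClosure X T.obj₃ →
      thickClosure X T.obj₁
  | summand {A E : C} : thickClosure X E → IsDirectSummand A E → thickClosure X A

/-- A presilting subcategory. -/
def IsPresilting (M : Set C) : Prop :=
  SummandClosed M ∧
    ∀ ⦃A B : C⦄, A ∈ M → B ∈ M → ∀ k : ℤ, 1 ≤ k → ∀ f : A ⟶ B⟦k⟧, f = 0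

/-- A silting subcategory. -/
def IsSilting (M : Set C) : Prop := IsPresilting M ∧ ∀ A : C, thickClosure M A

/-- A co-t-structure `(U, V)` is bounded if `⋃ₙ ΣⁿU = D = ⋃ₙ ΣⁿV`. -/
def BoundedPair (U V : Set C) : Prop :=
  (⋃ n : ℤ, shiftSet n U) = (Set.univ : Set C) ∧ (⋃ n : ℤ, shiftSet n V) = (Set.univ : Set C)

/-! For a co-t-structure `(U, V)`, `U = {A | Hom(A, ΣV) = 0}` and `V = {B | Hom(U, ΣB) = 0}`, so both
are closed under extensions, and `X ⊆ U₁` since `V₁ ⊆ Y`.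
For `M ∈ U₁ ∩ V₂`, the approximation triangles of `M` for `(X, Y)` already lie in the coheart:
in `Y' → X' → M → ΣY'`, `X' ∈ V₂` is an extension of `M` by `Y'`, and `Y' ∈ U₁` is an extension
of `X'` by `Σ⁻¹M`; dually for `M → Y'' → X'' → ΣM`. -/

lemma IsBiprodDecomp.symm {A B E : C} (h : IsBiprodDecomp A B E) : IsBiprodDecomp B A E := by
  obtain ⟨i, j, p, q, hip, hjq, hiq, hjp, htotal⟩ := h
  exact ⟨j, i, q, p, hjq, hip, hjp, hiq, by rwa [add_comm]⟩

lemma isBiprodDecomp_of_iso {A B E : C} (e : E ≅ A ⊞ B) : IsBiprodDecomp A B E := by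
  refine ⟨biprod.inl ≫ e.inv, biprod.inr ≫ e.inv, e.hom ≫ biprod.fst, e.hom ≫ biprod.snd,
    by simp, by simp, by simp, by simp, ?_⟩
  simp only [Category.assoc]
  rw [← Preadditive.comp_add, ← Category.assoc biprod.fst, ← Category.assoc biprod.snd,
    ← Preadditive.add_comp, biprod.total, Category.id_comp, Iso.hom_inv_id]

open ZeroObject in
lemma SummandClosed.mem_of_iso {S : Set C} (hS : SummandClosed S) {A E : C} (e : A ≅ E)
    (hE : E ∈ S) : A ∈ S :=
  hS hE ⟨0, e.hom, 0, e.inv, 0, by simp, by simp [Limits.id_zero], by simp, by simp, by simp⟩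

lemma SummandClosed.shift_mem_of_mem_shiftSet {S : Set C} (hS : SummandClosed S) {a b : ℤ}
    (hab : a + b = 0) {A : C} (hA : A ∈ shiftSet a S) : A⟦b⟧ ∈ S := by
  obtain ⟨B, hB, ⟨e⟩⟩ := hA
  exact hS.mem_of_iso ((shiftFunctor C b).mapIso e ≪≫ (shiftFunctorCompIsoId C a b hab).app B) hB

lemma isBiprodDecomp_of_mor₃_eq_zero {T : Triangle C} (hT : T ∈ distTriang C)
    (h : T.mor₃ = 0) : IsBiprodDecomp T.obj₁ T.obj₃ T.obj₂ :=
  let ⟨e, _⟩ := exists_iso_binaryBiproduct_of_distTriang T hT h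
  isBiprodDecomp_of_iso e

lemma isDirectSummand_obj₂_obj₃_of_mor₁_eq_zero {T : Triangle C} (hT : T ∈ distTriang C)
    (h : T.mor₁ = 0) : IsDirectSummand T.obj₂ T.obj₃ :=
  ⟨_, isBiprodDecomp_of_mor₃_eq_zero (rot_of_distTriang T hT) (by
    change -(T.mor₁⟦(1 : ℤ)⟧') = 0
    rw [h, Functor.map_zero, neg_zero])⟩

lemma isDirectSummand_shift_obj₂_obj₁_of_mor₂_eq_zero {T : Triangle C} (hT : T ∈ distTriang C)
    (h : T.mor₂ = 0) : IsDirectSummand (T.obj₂⟦(1 : ℤ)⟧) (T.obj₁⟦(1 : ℤ)⟧) :=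
  ⟨_, (isBiprodDecomp_of_mor₃_eq_zero (rot_of_distTriang _ (rot_of_distTriang T hT)) (by
    change -(T.mor₂⟦(1 : ℤ)⟧') = 0
    rw [h, Functor.map_zero, neg_zero])).symm⟩

lemma hom_shift_neg_one_eq_zero {A B : C} (h : ∀ f : A ⟶ B⟦(1 : ℤ)⟧, f = 0)
    (g : A⟦(-1 : ℤ)⟧ ⟶ B) : g = 0 := by
  apply (shiftFunctor C (1 : ℤ)).map_injective
  rw [Functor.map_zero,
    ← cancel_epi ((shiftFunctorCompIsoId C (-1 : ℤ) (1 : ℤ) (by omega)).inv.app A), comp_zero]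
  exact h _

lemma hom_to_obj₂_eq_zero {T : Triangle C} (hT : T ∈ distTriang C) {W : C}
    (h₁ : ∀ f : W ⟶ T.obj₁, f = 0) (h₃ : ∀ f : W ⟶ T.obj₃, f = 0) (f : W ⟶ T.obj₂) : f = 0 := by
  obtain ⟨g, rfl⟩ := Triangle.coyoneda_exact₂ T hT f (h₃ _)
  rw [h₁ g, zero_comp]

lemma hom_from_obj₂_eq_zero {T : Triangle C} (hT : T ∈ distTriang C) {W : C}
    (h₁ : ∀ f : T.obj₁ ⟶ W, f = 0) (h₃ : ∀ f : T.obj₃ ⟶ W, f = 0) (f : T.obj₂ ⟶ W) : f = 0 := by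
  obtain ⟨g, rfl⟩ := Triangle.yoneda_exact₂ T hT f (h₁ _)
  rw [h₃ g, comp_zero]

namespace IsCoTStructure

variable {U V : Set C}

lemma shift_neg_one_mem (h : IsCoTStructure U V) {A : C} (hA : A ∈ U) : A⟦(-1 : ℤ)⟧ ∈ U :=
  h.shift_le ⟨A, hA, ⟨Iso.refl _⟩⟩

lemma shift_one_mem (h : IsCoTStructure U V) {B : C} (hB : B ∈ V) : B⟦(1 : ℤ)⟧ ∈ V := by
  obtain ⟨A₀, B₀, hA₀, hB₀, f, g, w, hT⟩ := h.cover (B⟦(1 : ℤ)⟧)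
  exact h.summand_V hB₀ (isDirectSummand_obj₂_obj₃_of_mor₁_eq_zero hT
    (h.hom_zero (h.shift_le hA₀) hB f))

lemma mem_U_of_hom_eq_zero (h : IsCoTStructure U V) {A : C}
    (hA : ∀ ⦃B : C⦄, B ∈ V → ∀ f : A ⟶ B⟦(1 : ℤ)⟧, f = 0) : A ∈ U := by
  obtain ⟨A₀, B₀, hA₀, hB₀, f, g, w, hT⟩ := h.cover (A⟦(-1 : ℤ)⟧)
  have hA₀ : A₀⟦(1 : ℤ)⟧ ∈ U := h.summand_U.shift_mem_of_mem_shiftSet (by omega) hA₀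
  have hsummand := isDirectSummand_shift_obj₂_obj₁_of_mor₂_eq_zero hT
    (hom_shift_neg_one_eq_zero (hA hB₀) g)
  exact h.summand_U.mem_of_iso ((shiftFunctorCompIsoId C (-1 : ℤ) (1 : ℤ) (by omega)).app A).symm
    (h.summand_U hA₀ hsummand)

lemma mem_V_of_hom_eq_zero (h : IsCoTStructure U V) {B : C}
    (hB : ∀ ⦃A : C⦄, A ∈ U → ∀ f : A ⟶ B⟦(1 : ℤ)⟧, f = 0) : B ∈ V := by
  obtain ⟨A₀, B₀, ⟨A, hA, ⟨e⟩⟩, hB₀, f, g, w, hT⟩ := h.cover B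
  have hf : f = 0 := by
    rw [← cancel_epi e.inv, comp_zero]
    exact hom_shift_neg_one_eq_zero (hB hA) _
  exact h.summand_V hB₀ (isDirectSummand_obj₂_obj₃_of_mor₁_eq_zero hT hf)

lemma extClosed_U (h : IsCoTStructure U V) : ExtClosed U := fun _ hT h₁ h₃ =>
  h.mem_U_of_hom_eq_zero fun _ hB =>
    hom_from_obj₂_eq_zero hT (h.hom_zero h₁ hB) (h.hom_zero h₃ hB)

lemma extClosed_V (h : IsCoTStructure U V) : ExtClosed V := fun _ hT h₁ h₃ =>
  h.mem_V_of_hom_eq_zero fun _ hA =>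
    hom_to_obj₂_eq_zero (rot_of_distTriang _ (rot_of_distTriang _ (rot_of_distTriang _ hT)))
      (h.hom_zero hA h₁) (h.hom_zero hA h₃)

end IsCoTStructure

namespace IsCotorsionPair

variable {U₁ V₁ U₂ V₂ X Y : Set C}

lemma subset_of_coaisle_subset (hXY : IsCotorsionPair X Y) (h₁ : IsCoTStructure U₁ V₁)
    (hY₁ : V₁ ⊆ Y) : X ⊆ U₁ :=
  fun _ hA => h₁.mem_U_of_hom_eq_zero fun _ hB => hXY.hom_zero hA (hY₁ hB)

lemma exists_right_approximation_of_mem_coheart (hXY : IsCotorsionPair X Y)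
    (h₁ : IsCoTStructure U₁ V₁) (h₂ : IsCoTStructure U₂ V₂) (hY₁ : V₁ ⊆ Y) (hY₂ : Y ⊆ V₂)
    {M : C} (hM : M ∈ U₁ ∩ V₂) :
    ∃ (A B : C) (_ : A ∈ X ∩ V₂) (_ : B ∈ U₁ ∩ Y) (f : B ⟶ A) (g : A ⟶ M)
      (h : M ⟶ B⟦(1 : ℤ)⟧), Triangle.mk f g h ∈ distTriang C := by
  obtain ⟨A, B', hA, hB', f, g, w, hT⟩ := hXY.cover₁ M
  have hT' := inv_rot_of_distTriang _ hT
  have hB : B'⟦(-1 : ℤ)⟧ ∈ Y := hXY.summand_Y.shift_mem_of_mem_shiftSet (by omega) hB'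
  have hBU₁ : B'⟦(-1 : ℤ)⟧ ∈ U₁ := h₁.extClosed_U (inv_rot_of_distTriang _ hT')
    (h₁.shift_neg_one_mem hM.1) (hXY.subset_of_coaisle_subset h₁ hY₁ hA)
  exact ⟨A, _, ⟨hA, h₂.extClosed_V hT' (hY₂ hB) hM.2⟩, ⟨hBU₁, hB⟩, _, _, _, hT'⟩

lemma exists_left_approximation_of_mem_coheart (hXY : IsCotorsionPair X Y)
    (h₁ : IsCoTStructure U₁ V₁) (h₂ : IsCoTStructure U₂ V₂) (hY₁ : V₁ ⊆ Y) (hY₂ : Y ⊆ V₂)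
    {M : C} (hM : M ∈ U₁ ∩ V₂) :
    ∃ (A B : C) (_ : A ∈ X ∩ V₂) (_ : B ∈ U₁ ∩ Y) (f : M ⟶ B) (g : B ⟶ A)
      (h : A ⟶ M⟦(1 : ℤ)⟧), Triangle.mk f g h ∈ distTriang C := by
  obtain ⟨A', B, hA', hB, f, g, w, hT⟩ := hXY.cover₂ M
  have hT' := rot_of_distTriang _ hT
  have hA : A'⟦(1 : ℤ)⟧ ∈ X := hXY.summand_X.shift_mem_of_mem_shiftSet (by omega) hA'
  have hBU₁ : B ∈ U₁ := h₁.extClosed_U hT' hM.1 (hXY.subset_of_coaisle_subset h₁ hY₁ hA)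
  have hAV₂ : A'⟦(1 : ℤ)⟧ ∈ V₂ :=
    h₂.extClosed_V (rot_of_distTriang _ hT') (hY₂ hB) (h₂.shift_one_mem hM.2)
  exact ⟨_, B, ⟨hA, hAV₂⟩, ⟨hBU₁, hB⟩, _, _, _, hT'⟩

end IsCotorsionPair

theorem stmt1_general {U₁ V₁ U₂ V₂ : Set C}
    (h₁ : IsCoTStructure U₁ V₁) (h₂ : IsCoTStructure U₂ V₂)
    {X Y : Set C} (hXY : IsCotorsionPair X Y) (hY₁ : V₁ ⊆ Y) (hY₂ : Y ⊆ V₂) :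
    IsCotorsionPairIn (U₁ ∩ V₂) (X ∩ V₂) (U₁ ∩ Y) := by
  refine ⟨fun _ hA => ⟨hXY.subset_of_coaisle_subset h₁ hY₁ hA.1, hA.2⟩,
    fun _ hB => ⟨hB.1, hY₂ hB.2⟩, ?_, ?_, fun _ _ hA hB => hXY.hom_zero hA.1 hB.2,
    fun _ => hXY.exists_right_approximation_of_mem_coheart h₁ h₂ hY₁ hY₂,
    fun _ => hXY.exists_left_approximation_of_mem_coheart h₁ h₂ hY₁ hY₂⟩
  · rintro _ _ hE ⟨hAH, B, -, hdecomp⟩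
    exact ⟨hXY.summand_X hE.1 ⟨B, hdecomp⟩, hAH.2⟩
  · rintro _ _ hE ⟨hBH, A, -, hdecomp⟩
    exact ⟨hBH.1, hXY.summand_Y hE.2 ⟨A, hdecomp⟩⟩

/-- Theorem: if `(X,Y)` is a cotorsion pair in `D` with `V₁ ⊆ Y ⊆ V₂`, then
`(X ∩ V₂, U₁ ∩ Y)` is a cotorsion pair in the coheart `H = U₁ ∩ V₂`. -/
theorem stmt1 {U₁ V₁ U₂ V₂ : Set C}
    (h₁ : IsCoTStructure U₁ V₁) (h₂ : IsCoTStructure U₂ V₂) (hV : V₁ ⊆ V₂)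
    {X Y : Set C} (hXY : IsCotorsionPair X Y) (hY₁ : V₁ ⊆ Y) (hY₂ : Y ⊆ V₂) :
    IsCotorsionPairIn (U₁ ∩ V₂) (X ∩ V₂) (U₁ ∩ Y) :=
  stmt1_general h₁ h₂ hXY hY₁ hY₂
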